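/- arXiv:2501.17204 — 4 statements merged into one kernel-verified Lean document; each statement's English description precedes it below -/
import Mathlib

section
/- Suppose a, Φ : ℝ → ℝ are twice differentiable, a(t) > 0 for all t, K and B are real constants, and (a, Φ) satisfy the string background system, i.e. for all t: (E1) -3·a''(t)/a(t) + (-Φ''(t) - 3·(a'(t)/a(t))·Φ'(t)) - 2·Φ'(t)² = 0, and (E2) -2·a(t)·a''(t) + 2·a'(t)² + 2K - B/(2·a(t)⁴·e^{4Φ(t)}) - 2·Φ'(t)²·a(t)² = 0. Then for any real constant L, the dilaton beta function βΦ(t) = -22 + (3/2)·L·e^{-2Φ(t)}·[2·Φ'(t)² - 6·a'(t)²/a(t)² - 6·K/a(t)² + B/(2·a(t)⁶·e^{4Φ(t)})] is constant in t. -/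
/-!
Differentiating `e^{-2Φ} X`, where `X` is the bracket of `βΦ`, gives `e^{-2Φ} (X' - 2 Φ' X)`.
In `X'` the only second derivative of `Φ` enters through `(Φ'²)'`, and the constant `B` enters
through the last term of `X`; eliminating `Φ''` with (E1) and `B` with (E2) leaves an expression
in `a, a', a'', Φ', K` that vanishes identically.
-/

open Real

noncomputable def dilatonBeta (a Φ : ℝ → ℝ) (K B L t : ℝ) : ℝ :=
  -22 + (3 / 2) * L * exp (-2 * Φ t) *
    (2 * (deriv Φ t) ^ 2 - 6 * (deriv a t) ^ 2 / (a t) ^ 2 - 6 * K / (a t) ^ 2 +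
      B / (2 * (a t) ^ 6 * exp (4 * Φ t)))

/-- The pointwise identity behind the theorem: `x, v, w` stand for `a, a', a''`, `p, q` for
`Φ', Φ''` and `E` for `e^{4Φ}`; the left-hand side is `X' - 2 Φ' X`. -/
lemma bracket_deriv_sub_eq_zero {K B x v w p q E : ℝ} (hx : x ≠ 0) (hE : E ≠ 0)
    (hE1 : -3 * w / x + (-q - 3 * (v / x) * p) - 2 * p ^ 2 = 0)
    (hE2 : -2 * x * w + 2 * v ^ 2 + 2 * K - B / (2 * x ^ 4 * E) - 2 * p ^ 2 * x ^ 2 = 0) :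
    (4 * p * q - 12 * v * w / x ^ 2 + 12 * v ^ 3 / x ^ 3 + 12 * K * v / x ^ 3 -
        B * (3 * v + 2 * p * x) / (x ^ 7 * E)) -
      2 * p * (2 * p ^ 2 - 6 * v ^ 2 / x ^ 2 - 6 * K / x ^ 2 + B / (2 * x ^ 6 * E)) = 0 := by
  have hq : q = -3 * w / x - 3 * (v / x) * p - 2 * p ^ 2 := by linear_combination -hE1
  have hB : B = (-2 * x * w + 2 * v ^ 2 + 2 * K - 2 * p ^ 2 * x ^ 2) * (2 * x ^ 4 * E) := by
    field_simp at hE2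
    linear_combination -hE2
  subst hq hB
  field_simp
  ring

lemma hasDerivAt_dilatonBeta {a Φ : ℝ → ℝ} (K B L : ℝ) {t : ℝ}
    (ha : DifferentiableAt ℝ a t) (ha' : DifferentiableAt ℝ (deriv a) t)
    (hΦ : DifferentiableAt ℝ Φ t) (hΦ' : DifferentiableAt ℝ (deriv Φ) t) (ht : a t ≠ 0) :
    HasDerivAt (dilatonBeta a Φ K B L)
      ((3 / 2) * L * exp (-2 * Φ t) *
        ((4 * deriv Φ t * deriv (deriv Φ) t - 12 * deriv a t * deriv (deriv a) t / a t ^ 2 +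
            12 * deriv a t ^ 3 / a t ^ 3 + 12 * K * deriv a t / a t ^ 3 -
            B * (3 * deriv a t + 2 * deriv Φ t * a t) / (a t ^ 7 * exp (4 * Φ t))) -
          2 * deriv Φ t * (2 * deriv Φ t ^ 2 - 6 * deriv a t ^ 2 / a t ^ 2 - 6 * K / a t ^ 2 +
            B / (2 * a t ^ 6 * exp (4 * Φ t))))) t := by
  have hexp : HasDerivAt (fun s ↦ exp (-2 * Φ s)) (exp (-2 * Φ t) * (-2 * deriv Φ t)) t :=
    (hΦ.hasDerivAt.const_mul (-2)).exp
  have hkin := (hΦ'.hasDerivAt.pow 2).const_mul 2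
  have hhubble := ((ha'.hasDerivAt.pow 2).const_mul 6).div (ha.hasDerivAt.pow 2) (pow_ne_zero 2 ht)
  have hcurv := (hasDerivAt_const t (6 * K)).div (ha.hasDerivAt.pow 2) (pow_ne_zero 2 ht)
  have haxion := (hasDerivAt_const t B).div
    (((ha.hasDerivAt.pow 6).const_mul 2).mul (hΦ.hasDerivAt.const_mul 4).exp)
    (by positivity : 2 * a t ^ 6 * exp (4 * Φ t) ≠ 0)
  refine ((hasDerivAt_const t (-22 : ℝ)).add ((hexp.const_mul ((3 / 2) * L)).mul
    (((hkin.sub hhubble).sub hcurv).add haxion))).congr_deriv ?_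
  simp only [Pi.add_apply, Pi.sub_apply, Pi.mul_apply, Pi.div_apply, Pi.pow_apply]
  field_simp
  ring

/-- On solutions of the string background system (E1), (E2),
the dilaton beta function is constant in `t`. -/
theorem dilaton_beta_constant (a Φ : ℝ → ℝ) (K B : ℝ)
    (ha : Differentiable ℝ a) (ha' : Differentiable ℝ (deriv a))
    (hΦ : Differentiable ℝ Φ) (hΦ' : Differentiable ℝ (deriv Φ))
    (hpos : ∀ t, 0 < a t)
    (hE1 : ∀ t, -3 * deriv (deriv a) t / a t +
      (-(deriv (deriv Φ) t) - 3 * (deriv a t / a t) * deriv Φ t) - 2 * (deriv Φ t) ^ 2 = 0)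
    (hE2 : ∀ t, -2 * a t * deriv (deriv a) t + 2 * (deriv a t) ^ 2 + 2 * K -
      B / (2 * (a t) ^ 4 * Real.exp (4 * Φ t)) - 2 * (deriv Φ t) ^ 2 * (a t) ^ 2 = 0)
    (L : ℝ) :
    ∀ t s : ℝ,
      -22 + (3 / 2) * L * Real.exp (-2 * Φ t) *
        (2 * (deriv Φ t) ^ 2 - 6 * (deriv a t) ^ 2 / (a t) ^ 2 - 6 * K / (a t) ^ 2 +
          B / (2 * (a t) ^ 6 * Real.exp (4 * Φ t))) =
      -22 + (3 / 2) * L * Real.exp (-2 * Φ s) *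
        (2 * (deriv Φ s) ^ 2 - 6 * (deriv a s) ^ 2 / (a s) ^ 2 - 6 * K / (a s) ^ 2 +
          B / (2 * (a s) ^ 6 * Real.exp (4 * Φ s))) := by
  have hderiv : ∀ t, HasDerivAt (dilatonBeta a Φ K B L) 0 t := fun t ↦ by
    have h := hasDerivAt_dilatonBeta K B L (ha t) (ha' t) (hΦ t) (hΦ' t) (hpos t).ne'
    rwa [bracket_deriv_sub_eq_zero (hpos t).ne' (exp_pos _).ne' (hE1 t) (hE2 t), mul_zero] at h
  exact is_const_of_deriv_eq_zero (fun t ↦ (hderiv t).differentiableAt) fun t ↦ (hderiv t).deriv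
end

section
/- Let a₀ > 0 and Φ₀ be real numbers. Set K = -1, B = -4·a₀⁴·e^{4Φ₀}, and L = (11/3)·a₀²·e^{2Φ₀}. Then the constant functions a(t) = a₀ and Φ(t) = Φ₀ satisfy the string background system: (E1) -3·a''/a + (-Φ'' - 3·(a'/a)·Φ') - 2·Φ'² = 0 and (E2) -2·a·a'' + 2·a'² + 2K - B/(2·a⁴·e^{4Φ}) - 2·Φ'²·a² = 0 hold for all t, and moreover the dilaton beta function βΦ(t) = -22 + (3/2)·L·e^{-2Φ(t)}·[2·Φ'(t)² - 6·a'(t)²/a(t)² - 6·K/a(t)² + B/(2·a(t)⁶·e^{4Φ(t)})] vanishes identically. -/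
/-!
For a static background all derivatives vanish, so (E1) holds trivially, while (E2) and
`βΦ = 0` reduce to algebraic conditions on `K`, `B`, `L`. With `B = -4 a₀⁴ e^{4Φ₀}` the
axion term `B / (2 a₀⁴ e^{4Φ₀})` is the constant `-2`, which cancels the curvature term
`2K = -2` in (E2); in `βΦ` the bracket becomes `(6 - 2) / a₀²`, and the choice of `L`
makes `(3/2) L e^{-2Φ₀} · 4 / a₀² = 22`.
-/

open Real

lemma axion_term_eq_neg_two {a₀ : ℝ} (ha₀ : a₀ ≠ 0) (Φ₀ : ℝ) :
    -4 * a₀ ^ 4 * exp (4 * Φ₀) / (2 * a₀ ^ 4 * exp (4 * Φ₀)) = -2 := by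
  field_simp
  ring

lemma axion_term_div_sq_eq {a₀ : ℝ} (ha₀ : a₀ ≠ 0) (Φ₀ : ℝ) :
    -4 * a₀ ^ 4 * exp (4 * Φ₀) / (2 * a₀ ^ 6 * exp (4 * Φ₀)) = -2 / a₀ ^ 2 := by
  field_simp
  ring

lemma mul_exp_neg_two_mul (c Φ₀ : ℝ) :
    c * exp (2 * Φ₀) * exp (-2 * Φ₀) = c := by
  rw [mul_assoc, ← exp_add]
  simp

/-- The anti-Einstein static universe. With `K = -1`,
`B = -4·a₀⁴·e^{4Φ₀}` and `L = (11/3)·a₀²·e^{2Φ₀}`, the constant functions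
`a = a₀`, `Φ = Φ₀` satisfy the string background system (E1), (E2) and the
dilaton beta function vanishes identically. -/
theorem antiEinstein_static_universe (a₀ Φ₀ : ℝ) (ha₀ : 0 < a₀)
    (K B L : ℝ) (hK : K = -1) (hB : B = -4 * a₀ ^ 4 * Real.exp (4 * Φ₀))
    (hL : L = (11 / 3) * a₀ ^ 2 * Real.exp (2 * Φ₀))
    (a Φ : ℝ → ℝ) (haf : a = fun _ : ℝ => a₀) (hΦf : Φ = fun _ : ℝ => Φ₀) :
    (∀ t, -3 * deriv (deriv a) t / a t +
      (-(deriv (deriv Φ) t) - 3 * (deriv a t / a t) * deriv Φ t) - 2 * (deriv Φ t) ^ 2 = 0) ∧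
    (∀ t, -2 * a t * deriv (deriv a) t + 2 * (deriv a t) ^ 2 + 2 * K -
      B / (2 * (a t) ^ 4 * Real.exp (4 * Φ t)) - 2 * (deriv Φ t) ^ 2 * (a t) ^ 2 = 0) ∧
    (∀ t, -22 + (3 / 2) * L * Real.exp (-2 * Φ t) *
      (2 * (deriv Φ t) ^ 2 - 6 * (deriv a t) ^ 2 / (a t) ^ 2 - 6 * K / (a t) ^ 2 +
        B / (2 * (a t) ^ 6 * Real.exp (4 * Φ t))) = 0) := by
  subst haf hΦf hK hB hL
  simp only [deriv_const']
  refine ⟨fun _ => by ring, fun _ => ?_, fun _ => ?_⟩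
  · rw [axion_term_eq_neg_two ha₀.ne']
    ring
  · have hL : 11 / 3 * a₀ ^ 2 * exp (2 * Φ₀) * exp (-2 * Φ₀) = 11 / 3 * a₀ ^ 2 :=
      mul_exp_neg_two_mul _ _
    rw [axion_term_div_sq_eq ha₀.ne', mul_assoc (3 / 2 : ℝ), hL]
    field_simp
    ring
end

section
/- Let a₀ > 0, Φ₀ be real numbers, let K ∈ {-1, 0, 1}, let L > 0, and set B = 4·a₀⁴·e^{4Φ₀}·K (so that the constant functions a = a₀, Φ = Φ₀ satisfy the string background system). If the value βΦ = -22 - 6·K·L·e^{-2Φ₀}/a₀² of the dilaton beta function equals 0, then K = -1, L = (11/3)·a₀²·e^{2Φ₀}, and B = -4·a₀⁴·e^{4Φ₀} < 0. -/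
open Real

lemma curvature_mul_eq_of_dilatonBeta_eq_zero {a Φ K L : ℝ} (ha : a ≠ 0)
    (h : -22 - 6 * K * L * exp (-2 * Φ) / a ^ 2 = 0) :
    K * L = -(11 / 3) * a ^ 2 * exp (2 * Φ) := by
  have hexp : exp (-2 * Φ) * exp (2 * Φ) = 1 := by rw [← exp_add]; simp
  rw [sub_eq_zero, eq_comm, div_eq_iff (pow_ne_zero 2 ha)] at h
  linear_combination (1 / 6 * exp (2 * Φ)) * h - (K * L) * hexp

lemma eq_neg_one_of_mul_neg {K L : ℝ} (hK : K = -1 ∨ K = 0 ∨ K = 1) (hL : 0 < L)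
    (hKL : K * L < 0) : K = -1 := by
  rcases hK with rfl | rfl | rfl
  · rfl
  · simp at hKL
  · linarith

/-- Uniqueness of the anti-Einstein static universe. If the
constant value `-22 - 6·K·L·e^{-2Φ₀}/a₀²` of the dilaton beta function on the
static solution with `B = 4·a₀⁴·e^{4Φ₀}·K` vanishes, then `K = -1`,
`L = (11/3)·a₀²·e^{2Φ₀}`, and `B = -4·a₀⁴·e^{4Φ₀} < 0`. -/
theorem antiEinstein_uniqueness (a₀ Φ₀ K L B : ℝ) (ha₀ : 0 < a₀)
    (hK : K = -1 ∨ K = 0 ∨ K = 1) (hL : 0 < L)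
    (hB : B = 4 * a₀ ^ 4 * Real.exp (4 * Φ₀) * K)
    (hβΦ : -22 - 6 * K * L * Real.exp (-2 * Φ₀) / a₀ ^ 2 = 0) :
    K = -1 ∧ L = (11 / 3) * a₀ ^ 2 * Real.exp (2 * Φ₀) ∧
      B = -4 * a₀ ^ 4 * Real.exp (4 * Φ₀) ∧ B < 0 := by
  have hKL := curvature_mul_eq_of_dilatonBeta_eq_zero ha₀.ne' hβΦ
  have hscale : 0 < a₀ ^ 2 * exp (2 * Φ₀) := by positivity
  have hK₁ : K = -1 := eq_neg_one_of_mul_neg hK hL (by linarith)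
  subst hK₁
  have hBscale : 0 < 4 * a₀ ^ 4 * exp (4 * Φ₀) := by positivity
  exact ⟨rfl, by linarith, by rw [hB]; ring, by rw [hB]; linarith⟩
end

section
/- Let a, Φ : ℝ → ℝ be twice differentiable with a(t) > 0 for all t, and let K, B be real constants. Suppose (a, Φ) satisfy the string background system: (E1) -3·a''/a + (-Φ'' - 3·(a'/a)·Φ') - 2·Φ'² = 0 and (E2) -2·a·a'' + 2·a'² + 2K - B/(2·a⁴·e^{4Φ}) - 2·Φ'²·a² = 0 for all t. Then for all t, the derivative of the function t ↦ 2·Φ'(t)² - 6·a'(t)²/a(t)² - 6·K/a(t)² + B/(2·a(t)⁶·e^{4Φ(t)}) equals -12·Φ'(t)·a'(t)²/a(t)² - 12·K·Φ'(t)/a(t)² + B·Φ'(t)/(a(t)⁶·e^{4Φ(t)}) + 4·Φ'(t)³. -/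
/-!
Differentiate the bracket term by term. The result involves `a''` and `Φ''` only linearly,
and (E1), (E2) determine them: (E1) expresses `Φ''` through `a''/a`, and (E2) expresses
`a''/a` through first derivatives. Substituting both leaves a rational identity in
`a, a', Φ', e^{4Φ}`.
-/

open Real

noncomputable def dilatonBracket (a Φ : ℝ → ℝ) (K B : ℝ) (s : ℝ) : ℝ :=
  2 * deriv Φ s ^ 2 - 6 * deriv a s ^ 2 / a s ^ 2 - 6 * K / a s ^ 2 +
    B / (2 * a s ^ 6 * exp (4 * Φ s))

section
variable {a Φ : ℝ → ℝ} {a₁ φ₁ t : ℝ}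

lemma hasDerivAt_const_div_pow_mul_exp (ha : HasDerivAt a a₁ t) (hΦ : HasDerivAt Φ φ₁ t)
    (hat : a t ≠ 0) (B c : ℝ) (n : ℕ) :
    HasDerivAt (fun s => B / (a s ^ n * exp (c * Φ s)))
      (-(B / (a t ^ n * exp (c * Φ t))) * ((n : ℝ) * a₁ / a t + c * φ₁)) t := by
  have hexp : HasDerivAt (fun s => exp (c * Φ s)) (exp (c * Φ t) * (c * φ₁)) t :=
    (hΦ.const_mul c).exp
  have hden := (ha.pow n).mul hexp
  have hden_ne : a t ^ n * exp (c * Φ t) ≠ 0 := mul_ne_zero (pow_ne_zero n hat) (exp_ne_zero _)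
  refine ((hasDerivAt_const t B).div hden hden_ne).congr_deriv ?_
  simp only [Pi.pow_apply, Pi.mul_apply]
  rcases n with _ | n
  · field_simp
    push_cast
    ring
  · rw [Nat.add_sub_cancel, pow_succ]
    field_simp
    push_cast
    ring

lemma hasDerivAt_dilatonBracket (ha : DifferentiableAt ℝ a t)
    (ha' : DifferentiableAt ℝ (deriv a) t) (hΦ : DifferentiableAt ℝ Φ t)
    (hΦ' : DifferentiableAt ℝ (deriv Φ) t) (hat : a t ≠ 0) (K B : ℝ) :
    HasDerivAt (dilatonBracket a Φ K B)
      (4 * deriv Φ t * deriv (deriv Φ) t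
        - 12 * deriv a t * (a t * deriv (deriv a) t - deriv a t ^ 2) / a t ^ 3
        + 12 * K * deriv a t / a t ^ 3
        - B / (2 * a t ^ 6 * exp (4 * Φ t)) * (6 * deriv a t / a t + 4 * deriv Φ t)) t := by
  have hA := ha.hasDerivAt
  have hA' := ha'.hasDerivAt
  have hP' := hΦ'.hasDerivAt
  have ha2 : a t ^ 2 ≠ 0 := pow_ne_zero 2 hat
  have hW := hasDerivAt_const_div_pow_mul_exp hA hΦ.hasDerivAt hat (B / 2) 4 6
  have hsum := ((((hP'.pow 2).const_mul 2).sub (((hA'.pow 2).const_mul 6).div (hA.pow 2) ha2)).sub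
    ((hasDerivAt_const t (6 * K)).div (hA.pow 2) ha2)).add hW
  have hfun : dilatonBracket a Φ K B = fun s => 2 * deriv Φ s ^ 2 - 6 * deriv a s ^ 2 / a s ^ 2 -
      6 * K / a s ^ 2 + B / 2 / (a s ^ 6 * exp (4 * Φ s)) := by
    ext s
    rw [dilatonBracket, div_div, mul_assoc]
  rw [hfun]
  refine hsum.congr_deriv ?_
  simp only [Pi.pow_apply]
  field_simp
  ring

end

lemma bracket_derivative_eq_of_background {K B a a₁ a₂ φ₁ φ₂ E : ℝ}
    (ha : a ≠ 0) (hE : E ≠ 0)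
    (hE1 : -3 * a₂ / a + (-φ₂ - 3 * (a₁ / a) * φ₁) - 2 * φ₁ ^ 2 = 0)
    (hE2 : -2 * a * a₂ + 2 * a₁ ^ 2 + 2 * K - B / (2 * a ^ 4 * E) - 2 * φ₁ ^ 2 * a ^ 2 = 0) :
    4 * φ₁ * φ₂ - 12 * a₁ * (a * a₂ - a₁ ^ 2) / a ^ 3 + 12 * K * a₁ / a ^ 3
        - B / (2 * a ^ 6 * E) * (6 * a₁ / a + 4 * φ₁) =
      -12 * φ₁ * a₁ ^ 2 / a ^ 2 - 12 * K * φ₁ / a ^ 2 + B * φ₁ / (a ^ 6 * E) +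
        4 * φ₁ ^ 3 := by
  have ha₂ : a₂ = (a₁ ^ 2 + K - φ₁ ^ 2 * a ^ 2) / a - B / (4 * a ^ 5 * E) := by
    field_simp at hE2 ⊢
    linear_combination -hE2
  have hφ₂ : φ₂ = -3 * a₂ / a - 3 * a₁ * φ₁ / a - 2 * φ₁ ^ 2 := by
    field_simp at hE1 ⊢
    linear_combination -hE1
  subst hφ₂ ha₂
  field_simp
  ring

/-- On solutions of the string background system, the derivative
of the bracket `2·Φ'² - 6·a'²/a² - 6·K/a² + B/(2·a⁶·e^{4Φ})` equals
`-12·Φ'·a'²/a² - 12·K·Φ'/a² + B·Φ'/(a⁶·e^{4Φ}) + 4·Φ'³`. -/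
theorem bracket_derivative_formula (a Φ : ℝ → ℝ) (K B : ℝ)
    (ha : Differentiable ℝ a) (ha' : Differentiable ℝ (deriv a))
    (hΦ : Differentiable ℝ Φ) (hΦ' : Differentiable ℝ (deriv Φ))
    (hpos : ∀ t, 0 < a t)
    (hE1 : ∀ t, -3 * deriv (deriv a) t / a t +
      (-(deriv (deriv Φ) t) - 3 * (deriv a t / a t) * deriv Φ t) -
      2 * (deriv Φ t) ^ 2 = 0)
    (hE2 : ∀ t, -2 * a t * deriv (deriv a) t + 2 * (deriv a t) ^ 2 + 2 * K -
      B / (2 * (a t) ^ 4 * Real.exp (4 * Φ t)) -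
      2 * (deriv Φ t) ^ 2 * (a t) ^ 2 = 0) :
    ∀ t : ℝ,
      deriv (fun s => 2 * (deriv Φ s) ^ 2 - 6 * (deriv a s) ^ 2 / (a s) ^ 2 -
        6 * K / (a s) ^ 2 + B / (2 * (a s) ^ 6 * Real.exp (4 * Φ s))) t =
      -12 * deriv Φ t * (deriv a t) ^ 2 / (a t) ^ 2 -
        12 * K * deriv Φ t / (a t) ^ 2 +
        B * deriv Φ t / ((a t) ^ 6 * Real.exp (4 * Φ t)) +
        4 * (deriv Φ t) ^ 3 := by
  intro t
  have hat : a t ≠ 0 := (hpos t).ne'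
  exact (hasDerivAt_dilatonBracket (ha t) (ha' t) (hΦ t) (hΦ' t) hat K B).deriv.trans
    (bracket_derivative_eq_of_background hat (exp_ne_zero _) (hE1 t) (hE2 t))
end
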